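/- Coordinate-wise divergence criterion: with loss(D) = -(1/2)log det D + (1/2)log det(XᵀX+D) + (a₀+n/2)·log{b₀ + RSS(D)/2}, its partial derivative in dⱼ equals -xⱼᵀPⱼxⱼ/[2dⱼ(dⱼ+xⱼᵀPⱼxⱼ)] + (a₀+n/2)·(xⱼᵀPⱼy)²/[2(b₀+RSS(D)/2)(dⱼ+xⱼᵀPⱼxⱼ)²], and this derivative is strictly negative for all dⱼ > 0 whenever (xⱼᵀPⱼy)² < (b₀ + yᵀPⱼy/2)·xⱼᵀPⱼxⱼ/(a₀+n/2). -/

import Mathlib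

open Matrix

/-- The full design matrix `X = [xⱼ, X₋ⱼ]` with the `j`-th column separated out. -/
noncomputable def Xfull {n p : ℕ} (x : Fin n → ℝ) (Xm : Matrix (Fin n) (Fin p) ℝ) :
    Matrix (Fin n) (Unit ⊕ Fin p) ℝ :=
  Matrix.fromCols (fun i _ => x i) Xm

/-- `Pⱼ = Iₙ - X₋ⱼ(X₋ⱼᵀX₋ⱼ + D₋ⱼ)⁻¹X₋ⱼᵀ`. -/
noncomputable def Pmat {n p : ℕ} (Xm : Matrix (Fin n) (Fin p) ℝ) (dm : Fin p → ℝ) :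
    Matrix (Fin n) (Fin n) ℝ :=
  1 - Xm * (Xmᵀ * Xm + Matrix.diagonal dm)⁻¹ * Xmᵀ

/-- `RSS(D) = yᵀy - yᵀX(XᵀX + D)⁻¹Xᵀy` as a function of the `j`-th precision `dⱼ`. -/
noncomputable def RSS {n p : ℕ} (x : Fin n → ℝ) (Xm : Matrix (Fin n) (Fin p) ℝ)
    (y : Fin n → ℝ) (dm : Fin p → ℝ) (dj : ℝ) : ℝ :=
  y ⬝ᵥ y - ((Xfull x Xm)ᵀ.mulVec y) ⬝ᵥ
    (((Xfull x Xm)ᵀ * Xfull x Xm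
      + Matrix.diagonal (Sum.elim (fun _ => dj) dm))⁻¹).mulVec ((Xfull x Xm)ᵀ.mulVec y)

/-- `loss(D) = -(1/2)log det D + (1/2)log det(XᵀX+D) + (a₀+n/2)·log{b₀ + RSS(D)/2}`
as a function of `dⱼ` with the remaining precisions fixed. -/
noncomputable def loss {n p : ℕ} (x : Fin n → ℝ) (Xm : Matrix (Fin n) (Fin p) ℝ)
    (y : Fin n → ℝ) (dm : Fin p → ℝ) (a0 b0 : ℝ) (dj : ℝ) : ℝ :=
  -(1/2) * Real.log ((Matrix.diagonal (Sum.elim (fun _ => dj) dm) :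
      Matrix (Unit ⊕ Fin p) (Unit ⊕ Fin p) ℝ).det)
  + (1/2) * Real.log (((Xfull x Xm)ᵀ * Xfull x Xm
      + Matrix.diagonal (Sum.elim (fun _ => dj) dm)).det)
  + (a0 + n/2) * Real.log (b0 + RSS x Xm y dm dj / 2)

/-- The closed form of `∂ loss / ∂ dⱼ`. -/
noncomputable def dloss {n p : ℕ} (x : Fin n → ℝ) (Xm : Matrix (Fin n) (Fin p) ℝ)
    (y : Fin n → ℝ) (dm : Fin p → ℝ) (a0 b0 : ℝ) (dj : ℝ) : ℝ :=
  -(x ⬝ᵥ (Pmat Xm dm).mulVec x) / (2 * dj * (dj + x ⬝ᵥ (Pmat Xm dm).mulVec x))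
  + (a0 + n/2) * (x ⬝ᵥ (Pmat Xm dm).mulVec y)^2
      / (2 * (b0 + RSS x Xm y dm dj / 2) * (dj + x ⬝ᵥ (Pmat Xm dm).mulVec x)^2)

/-!
Eliminating the `j`-th coordinate (a Schur complement with respect to `X₋ⱼᵀX₋ⱼ + D₋ⱼ`) gives,
with `s = xⱼᵀPⱼxⱼ`, `t = yᵀPⱼy`, `u = xⱼᵀPⱼy`,
`det(XᵀX + D) = det(X₋ⱼᵀX₋ⱼ + D₋ⱼ) (dⱼ + s)` and `RSS(D) = t - u² / (dⱼ + s)`,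
so the loss is an explicit function of `dⱼ` and can be differentiated directly.
`Pⱼ` is itself a Schur complement of the positive semidefinite matrix
`[I, X₋ⱼ]ᵀ[I, X₋ⱼ] + diag(0, D₋ⱼ)`, hence positive semidefinite; Cauchy–Schwarz `u² ≤ st`
then gives `RSS ≥ 0`, and the sign of the derivative is that of
`(a₀ + n/2) u² dⱼ - s (b₀ + RSS/2)(dⱼ + s)`, which the hypothesis makes negative.
-/

namespace Matrix

variable {m k : Type*} [Fintype m] [Fintype k]

theorem PosSemidef.sq_dotProduct_mulVec_le [DecidableEq m] {P : Matrix m m ℝ}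
    (hP : P.PosSemidef) (v w : m → ℝ) :
    (v ⬝ᵥ P *ᵥ w) ^ 2 ≤ (v ⬝ᵥ P *ᵥ v) * (w ⬝ᵥ P *ᵥ w) := by
  have hnonneg (v : m → ℝ) : 0 ≤ P.toBilin' v v := by
    simpa [toBilin'_apply'] using hP.dotProduct_mulVec_nonneg v
  have hsymm : LinearMap.IsSymm P.toBilin' :=
    LinearMap.BilinForm.isSymm_iff.mp (isSymm_toBilin'_iff_isSymm.mpr hP.isHermitian)
  simpa [toBilin'_apply'] using LinearMap.BilinForm.apply_sq_le_of_symm _ hnonneg hsymm v w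

theorem IsSymm.dotProduct_mulVec_comm {R : Type*} [CommSemiring R] {P : Matrix m m R}
    (hP : P.IsSymm) (v w : m → R) : v ⬝ᵥ P *ᵥ w = w ⬝ᵥ P *ᵥ v := by
  rw [dotProduct_mulVec, ← mulVec_transpose, hP.eq, dotProduct_comm]

theorem posDef_transpose_mul_self_add_diagonal [DecidableEq k] (A : Matrix m k ℝ) {d : k → ℝ}
    (hd : ∀ i, 0 < d i) : (Aᵀ * A + diagonal d).PosDef :=
  (PosDef.diagonal hd).posSemidef_add (by simpa using posSemidef_conjTranspose_mul_self A)

theorem posSemidef_one_sub_mul_inv_mul_transpose [DecidableEq m] [DecidableEq k]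
    (A : Matrix m k ℝ) {d : k → ℝ} (hd : ∀ i, 0 < d i) :
    (1 - A * (Aᵀ * A + diagonal d)⁻¹ * Aᵀ).PosSemidef := by
  have hM := posDef_transpose_mul_self_add_diagonal A hd
  have : Invertible (Aᵀ * A + diagonal d) := hM.isUnit.invertible
  have hblock : fromBlocks 1 A Aᵀ (Aᵀ * A + diagonal d)
      = (fromCols 1 A)ᵀ * fromCols 1 A + diagonal (0 ⊕ᵥ d) := by
    rw [transpose_fromCols, fromRows_mul_fromCols, ← fromBlocks_diagonal, fromBlocks_add]
    simp
  have hpsd : (fromBlocks 1 A Aᵀ (Aᵀ * A + diagonal d)).PosSemidef := by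
    have hgram : ((fromCols (1 : Matrix m m ℝ) A)ᵀ * fromCols 1 A).PosSemidef := by
      simpa using posSemidef_conjTranspose_mul_self (fromCols (1 : Matrix m m ℝ) A)
    rw [hblock]
    refine hgram.add (PosSemidef.diagonal ?_)
    rintro (i | i)
    · simp
    · simpa using (hd i).le
  simpa using (PosDef.fromBlocks₂₂ 1 A hM).mp (by simpa using hpsd)

theorem dotProduct_one_sub_mul_mul_transpose_mulVec [DecidableEq m] (A : Matrix m k ℝ)
    (N : Matrix k k ℝ) (v w : m → ℝ) :
    v ⬝ᵥ (1 - A * N * Aᵀ) *ᵥ w = v ⬝ᵥ w - (Aᵀ *ᵥ v) ⬝ᵥ N *ᵥ (Aᵀ *ᵥ w) := by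
  rw [sub_mulVec, one_mulVec, dotProduct_sub, ← mulVec_mulVec, ← mulVec_mulVec,
    dotProduct_mulVec v A, ← mulVec_transpose]

end Matrix

section Design

variable {n p : ℕ} (x : Fin n → ℝ) (Xm : Matrix (Fin n) (Fin p) ℝ) (y : Fin n → ℝ)
  {dm : Fin p → ℝ}

theorem Pmat_posSemidef (hdm : ∀ j, 0 < dm j) : (Pmat Xm dm).PosSemidef :=
  posSemidef_one_sub_mul_inv_mul_transpose Xm hdm

theorem dotProduct_Pmat_mulVec (v w : Fin n → ℝ) :
    v ⬝ᵥ Pmat Xm dm *ᵥ w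
      = v ⬝ᵥ w - (Xmᵀ *ᵥ v) ⬝ᵥ (Xmᵀ * Xm + diagonal dm)⁻¹ *ᵥ (Xmᵀ *ᵥ w) :=
  dotProduct_one_sub_mul_mul_transpose_mulVec Xm _ v w

theorem dotProduct_Pmat_mulVec_self_nonneg (hdm : ∀ j, 0 < dm j) (v : Fin n → ℝ) :
    0 ≤ v ⬝ᵥ Pmat Xm dm *ᵥ v := by
  simpa using (Pmat_posSemidef Xm hdm).dotProduct_mulVec_nonneg v

theorem Xfull_transpose_mulVec :
    (Xfull x Xm)ᵀ *ᵥ y = Sum.elim (fun _ => x ⬝ᵥ y) (Xmᵀ *ᵥ y) := by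
  ext (i | i) <;> simp [Xfull, fromCols, mulVec, dotProduct]

theorem Xfull_gram_add_diagonal (dj : ℝ) :
    (Xfull x Xm)ᵀ * Xfull x Xm + diagonal (Sum.elim (fun _ => dj) dm)
      = fromBlocks (of fun _ _ => x ⬝ᵥ x + dj) (replicateRow Unit (Xmᵀ *ᵥ x))
          (replicateCol Unit (Xmᵀ *ᵥ x)) (Xmᵀ * Xm + diagonal dm) := by
  ext (i | i) (j | j) <;>
    simp [Xfull, fromCols, mul_apply, diagonal, mulVec, dotProduct, mul_comm]

theorem det_Xfull_gram_add_diagonal (hdm : ∀ j, 0 < dm j) (dj : ℝ) :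
    ((Xfull x Xm)ᵀ * Xfull x Xm + diagonal (Sum.elim (fun _ => dj) dm)).det
      = (Xmᵀ * Xm + diagonal dm).det * (dj + x ⬝ᵥ Pmat Xm dm *ᵥ x) := by
  have : Invertible (Xmᵀ * Xm + diagonal dm) :=
    (posDef_transpose_mul_self_add_diagonal Xm hdm).isUnit.invertible
  rw [Xfull_gram_add_diagonal, det_fromBlocks₂₂, invOf_eq_nonsing_inv, det_unique (n := Unit),
    Matrix.sub_apply, of_apply, Matrix.mul_assoc, ← replicateCol_mulVec,
    replicateRow_mul_replicateCol_apply, dotProduct_Pmat_mulVec]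
  ring

theorem Xfull_gram_add_diagonal_inv_mulVec (hdm : ∀ j, 0 < dm j) {dj : ℝ}
    (hdj : dj + x ⬝ᵥ Pmat Xm dm *ᵥ x ≠ 0) :
    ((Xfull x Xm)ᵀ * Xfull x Xm + diagonal (Sum.elim (fun _ => dj) dm))⁻¹
        *ᵥ ((Xfull x Xm)ᵀ *ᵥ y)
      = Sum.elim (fun _ => x ⬝ᵥ Pmat Xm dm *ᵥ y / (dj + x ⬝ᵥ Pmat Xm dm *ᵥ x))
          ((Xmᵀ * Xm + diagonal dm)⁻¹ *ᵥ (Xmᵀ *ᵥ y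
            - (x ⬝ᵥ Pmat Xm dm *ᵥ y / (dj + x ⬝ᵥ Pmat Xm dm *ᵥ x)) • Xmᵀ *ᵥ x)) := by
  set M := Xmᵀ * Xm + diagonal dm with hM_def
  have hM := posDef_transpose_mul_self_add_diagonal Xm hdm
  have : Invertible M := hM.isUnit.invertible
  have : Invertible ((Xfull x Xm)ᵀ * Xfull x Xm + diagonal (Sum.elim (fun _ => dj) dm)) :=
    invertibleOfIsUnitDet _ <| by
      rw [det_Xfull_gram_add_diagonal x Xm hdm]
      exact (mul_ne_zero hM.det_pos.ne' hdj).isUnit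
  have hs : (Xmᵀ *ᵥ x) ⬝ᵥ M⁻¹ *ᵥ (Xmᵀ *ᵥ x) = x ⬝ᵥ x - x ⬝ᵥ Pmat Xm dm *ᵥ x := by
    rw [dotProduct_Pmat_mulVec]; ring
  have hu : (Xmᵀ *ᵥ x) ⬝ᵥ M⁻¹ *ᵥ (Xmᵀ *ᵥ y) = x ⬝ᵥ y - x ⬝ᵥ Pmat Xm dm *ᵥ y := by
    rw [dotProduct_Pmat_mulVec]; ring
  set s := x ⬝ᵥ Pmat Xm dm *ᵥ x
  set u := x ⬝ᵥ Pmat Xm dm *ᵥ y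
  have hβ : u / (dj + s) * (dj + s) = u := div_mul_cancel₀ _ hdj
  refine inv_mulVec_eq_vec ?_
  rw [Xfull_gram_add_diagonal, Xfull_transpose_mulVec, fromBlocks_mulVec, Sum.elim_comp_inl,
    Sum.elim_comp_inr, ← hM_def, mulVec_mulVec _ M, mul_inv_of_invertible, one_mulVec,
    replicateRow_mulVec_eq_const, mulVec_sub, mulVec_smul, dotProduct_sub, dotProduct_smul, hu, hs]
  ext (i | i)
  · simp only [dotProduct, Sum.elim_inl, smul_eq_mul, Pi.add_apply, mulVec, Finset.univ_unique,
      PUnit.default_eq_unit, of_apply, Finset.sum_const, Finset.card_singleton, one_smul,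
      Function.const_apply]
    linear_combination -hβ
  · simp [mulVec, dotProduct, mul_comm]

theorem RSS_eq (hdm : ∀ j, 0 < dm j) {dj : ℝ} (hdj : dj + x ⬝ᵥ Pmat Xm dm *ᵥ x ≠ 0) :
    RSS x Xm y dm dj = y ⬝ᵥ Pmat Xm dm *ᵥ y
      - (x ⬝ᵥ Pmat Xm dm *ᵥ y) ^ 2 / (dj + x ⬝ᵥ Pmat Xm dm *ᵥ x) := by
  have hM := posDef_transpose_mul_self_add_diagonal Xm hdm
  have hu : (Xmᵀ *ᵥ y) ⬝ᵥ (Xmᵀ * Xm + diagonal dm)⁻¹ *ᵥ (Xmᵀ *ᵥ x)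
      = x ⬝ᵥ y - x ⬝ᵥ Pmat Xm dm *ᵥ y := by
    rw [(isHermitian_iff_isSymm.mp hM.isHermitian).inv.dotProduct_mulVec_comm,
      dotProduct_Pmat_mulVec]
    ring
  have ht : (Xmᵀ *ᵥ y) ⬝ᵥ (Xmᵀ * Xm + diagonal dm)⁻¹ *ᵥ (Xmᵀ *ᵥ y)
      = y ⬝ᵥ y - y ⬝ᵥ Pmat Xm dm *ᵥ y := by
    rw [dotProduct_Pmat_mulVec]; ring
  rw [RSS, Xfull_gram_add_diagonal_inv_mulVec x Xm y hdm hdj, Xfull_transpose_mulVec,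
    sumElim_dotProduct_sumElim, mulVec_sub, mulVec_smul, dotProduct_sub, dotProduct_smul, hu, ht]
  simp only [dotProduct, Finset.univ_unique, Finset.sum_singleton, smul_eq_mul]
  field_simp
  ring

end Design

section Loss

open Real

variable {n p : ℕ} (x : Fin n → ℝ) (Xm : Matrix (Fin n) (Fin p) ℝ) (y : Fin n → ℝ)
  {dm : Fin p → ℝ}

theorem RSS_nonneg (hdm : ∀ j, 0 < dm j) {d : ℝ} (hd : 0 < d) : 0 ≤ RSS x Xm y dm d := by
  have hs := dotProduct_Pmat_mulVec_self_nonneg Xm hdm x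
  have ht := dotProduct_Pmat_mulVec_self_nonneg Xm hdm y
  have hcs := (Pmat_posSemidef Xm hdm).sq_dotProduct_mulVec_le x y
  rw [RSS_eq x Xm y hdm (by positivity), sub_nonneg, div_le_iff₀ (by positivity)]
  nlinarith

theorem hasDerivAt_RSS (hdm : ∀ j, 0 < dm j) {d : ℝ} (hd : d + x ⬝ᵥ Pmat Xm dm *ᵥ x ≠ 0) :
    HasDerivAt (RSS x Xm y dm)
      ((x ⬝ᵥ Pmat Xm dm *ᵥ y) ^ 2 / (d + x ⬝ᵥ Pmat Xm dm *ᵥ x) ^ 2) d := by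
  set s := x ⬝ᵥ Pmat Xm dm *ᵥ x with hs_def
  set u := x ⬝ᵥ Pmat Xm dm *ᵥ y with hu_def
  have h := ((((hasDerivAt_id' d).add_const s).inv hd).const_mul (u ^ 2)).const_sub
    (y ⬝ᵥ Pmat Xm dm *ᵥ y)
  refine (h.congr_of_eventuallyEq ?_).congr_deriv ?_
  · filter_upwards [(continuous_add_const s).continuousAt.eventually_ne hd] with e he
    rw [RSS_eq x Xm y hdm he, ← hs_def, ← hu_def]
    simp only [Pi.inv_apply, div_eq_mul_inv]
  · ring

theorem loss_eq (a0 b0 : ℝ) (hdm : ∀ j, 0 < dm j) {d : ℝ} (hd : 0 < d) :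
    loss x Xm y dm a0 b0 d
      = -(1/2) * log d + (1/2) * log (d + x ⬝ᵥ Pmat Xm dm *ᵥ x)
        + (a0 + n/2) * log (b0 + RSS x Xm y dm d / 2)
        + ((Xmᵀ * Xm + diagonal dm).det.log - log (∏ j, dm j)) / 2 := by
  have hs := dotProduct_Pmat_mulVec_self_nonneg Xm hdm x
  have hdiag : (diagonal (Sum.elim (fun _ => d) dm) : Matrix (Unit ⊕ Fin p) _ ℝ).det
      = d * ∏ j, dm j := by
    simp [det_diagonal, Fintype.prod_sum_type]
  rw [loss, hdiag, det_Xfull_gram_add_diagonal x Xm hdm,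
    log_mul hd.ne' (Finset.prod_pos fun j _ => hdm j).ne',
    log_mul (posDef_transpose_mul_self_add_diagonal Xm hdm).det_pos.ne' (by positivity)]
  ring

theorem hasDerivAt_loss (a0 : ℝ) {b0 : ℝ} (hb0 : 0 < b0) (hdm : ∀ j, 0 < dm j) {d : ℝ}
    (hd : 0 < d) : HasDerivAt (loss x Xm y dm a0 b0) (dloss x Xm y dm a0 b0 d) d := by
  have hs := dotProduct_Pmat_mulVec_self_nonneg Xm hdm x
  have hds : 0 < d + x ⬝ᵥ Pmat Xm dm *ᵥ x := by positivity
  have hB : 0 < b0 + RSS x Xm y dm d / 2 := by linarith [RSS_nonneg x Xm y hdm hd]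
  have hlog_d := (hasDerivAt_log hd.ne').const_mul (-(1/2))
  have hlog_ds := (((hasDerivAt_id' d).add_const _).log hds.ne').const_mul (1/2)
  have hlog_B := ((((hasDerivAt_RSS x Xm y hdm hds.ne').div_const 2).const_add b0).log
    hB.ne').const_mul (a0 + n/2)
  have h := ((hlog_d.add hlog_ds).add hlog_B).add_const
    (((Xmᵀ * Xm + diagonal dm).det.log - log (∏ j, dm j)) / 2)
  refine (h.congr_of_eventuallyEq ?_).congr_deriv ?_
  · filter_upwards [Ioi_mem_nhds hd] with e he using loss_eq x Xm y a0 b0 hdm he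
  · simp only [dloss]
    field_simp
    ring

theorem dloss_neg (a0 : ℝ) {b0 : ℝ} (hb0 : 0 < b0) (hdm : ∀ j, 0 < dm j)
    (hc : (a0 + n/2) * (x ⬝ᵥ Pmat Xm dm *ᵥ y) ^ 2
      < (b0 + y ⬝ᵥ Pmat Xm dm *ᵥ y / 2) * x ⬝ᵥ Pmat Xm dm *ᵥ x)
    {d : ℝ} (hd : 0 < d) : dloss x Xm y dm a0 b0 d < 0 := by
  have hs := dotProduct_Pmat_mulVec_self_nonneg Xm hdm x
  have ht := dotProduct_Pmat_mulVec_self_nonneg Xm hdm y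
  have hcs := (Pmat_posSemidef Xm hdm).sq_dotProduct_mulVec_le x y
  have hds : 0 < d + x ⬝ᵥ Pmat Xm dm *ᵥ x := by positivity
  have hB : 0 < b0 + RSS x Xm y dm d / 2 := by linarith [RSS_nonneg x Xm y hdm hd]
  have hBds : (b0 + RSS x Xm y dm d / 2) * (d + x ⬝ᵥ Pmat Xm dm *ᵥ x)
      = (b0 + y ⬝ᵥ Pmat Xm dm *ᵥ y / 2) * (d + x ⬝ᵥ Pmat Xm dm *ᵥ x)
        - (x ⬝ᵥ Pmat Xm dm *ᵥ y) ^ 2 / 2 := by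
    rw [RSS_eq x Xm y hdm hds.ne']
    field_simp
    ring
  set s := x ⬝ᵥ Pmat Xm dm *ᵥ x
  set t := y ⬝ᵥ Pmat Xm dm *ᵥ y
  set u := x ⬝ᵥ Pmat Xm dm *ᵥ y
  set B := b0 + RSS x Xm y dm d / 2
  have hkey : (a0 + n/2) * u ^ 2 * d < s * (B * (d + s)) := by
    have hslack : 0 ≤ (b0 + t / 2) * s - u ^ 2 / 2 := by nlinarith
    rw [hBds]
    nlinarith [mul_lt_mul_of_pos_right hc hd, mul_nonneg hs hslack]
  have hlt : (a0 + n/2) * u ^ 2 / (2 * B * (d + s) ^ 2) < s / (2 * d * (d + s)) := by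
    rw [div_lt_div_iff₀ (by positivity) (by positivity)]
    linear_combination (2 * (d + s)) * hkey
  rw [dloss, neg_div]
  linarith

end Loss

theorem stmt7_general {n p : ℕ} (x : Fin n → ℝ) (Xm : Matrix (Fin n) (Fin p) ℝ)
    (y : Fin n → ℝ) (dm : Fin p → ℝ) (hdm : ∀ j, 0 < dm j)
    (a0 b0 : ℝ) (ha0 : 0 < a0) (hb0 : 0 < b0) :
    (∀ dj : ℝ, 0 < dj →
      HasDerivAt (loss x Xm y dm a0 b0) (dloss x Xm y dm a0 b0 dj) dj) ∧
    ((x ⬝ᵥ (Pmat Xm dm).mulVec y)^2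
        < (b0 + (y ⬝ᵥ (Pmat Xm dm).mulVec y) / 2) * (x ⬝ᵥ (Pmat Xm dm).mulVec x)
            / (a0 + n/2) →
      ∀ dj : ℝ, 0 < dj → dloss x Xm y dm a0 b0 dj < 0) := by
  refine ⟨fun dj hdj => hasDerivAt_loss x Xm y a0 hb0 hdm hdj,
    fun h dj hdj => dloss_neg x Xm y a0 hb0 hdm ?_ hdj⟩
  rwa [lt_div_iff₀ (by positivity), mul_comm] at h

/-- Coordinate-wise divergence criterion: the partial derivative of the loss in `dⱼ`
has the stated closed form, and is strictly negative for all `dⱼ > 0` whenever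
`(xⱼᵀPⱼy)² < (b₀ + yᵀPⱼy/2)·xⱼᵀPⱼxⱼ/(a₀+n/2)`. -/
theorem stmt7 {n p : ℕ} (hn : 1 ≤ n) (x : Fin n → ℝ) (Xm : Matrix (Fin n) (Fin p) ℝ)
    (y : Fin n → ℝ) (dm : Fin p → ℝ) (hdm : ∀ j, 0 < dm j)
    (a0 b0 : ℝ) (ha0 : 0 < a0) (hb0 : 0 < b0)
    (hq : 0 < x ⬝ᵥ (Pmat Xm dm).mulVec x) :
    (∀ dj : ℝ, 0 < dj →
      HasDerivAt (loss x Xm y dm a0 b0) (dloss x Xm y dm a0 b0 dj) dj) ∧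
    ((x ⬝ᵥ (Pmat Xm dm).mulVec y)^2
        < (b0 + (y ⬝ᵥ (Pmat Xm dm).mulVec y) / 2) * (x ⬝ᵥ (Pmat Xm dm).mulVec x)
            / (a0 + n/2) →
      ∀ dj : ℝ, 0 < dj → dloss x Xm y dm a0 b0 dj < 0) :=
  stmt7_general x Xm y dm hdm a0 b0 ha0 hb0
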